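/- For σ > 0 and any x ≥ -1/2, the alternating tail bound holds: for any positive integer k with 2k-1 > σ - x (so the terms become convex and decreasing), ∑_{j≥2k-1} (-1)^{j-1} exp(-(j²+2xj)/(2σ²)) ≥ (1/2)·exp(-((2k-1)²+2x(2k-1))/(2σ²)). -/

import Mathlib

/-!
Write `g(t) = exp (-(t² + 2xt) / (2σ²))`. For `t + x ≥ σ` the sequence `g(t), g(t+1), …` is
summable and discretely convex, `2 g(t+1) ≤ g(t) + g(t+2)`: the ratio of consecutive terms is
`exp (-δ)` with `δ = (2(t+x)+1)/(2σ²)` and shrinks by the factor `exp (-1/σ²)`, and `1/σ² ≤ δ²`.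
For a summable convex sequence `f`, twice the alternating sum is `f 0` plus the alternating sum
of the antitone differences `f j - f (j+1)`, which is nonnegative.
-/

open Real

theorem tsum_alternating_nonneg_of_antitone {d : ℕ → ℝ} (hd : Antitone d) (hs : Summable d) :
    0 ≤ ∑' j, (-1) ^ j * d j := by
  simpa using hd.alternating_series_le_tendsto hs.tendsto_alternating_series_tsum 0

theorem half_le_tsum_alternating_of_convex {f : ℕ → ℝ} (hf : Summable f)
    (hconv : ∀ j, 2 * f (j + 1) ≤ f j + f (j + 2)) :
    f 0 / 2 ≤ ∑' j, (-1) ^ j * f j := by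
  have hf₁ : Summable fun j ↦ f (j + 1) := (summable_nat_add_iff 1).2 hf
  have hshift : ∑' j, (-1) ^ j * f j = f 0 - ∑' j, (-1) ^ j * f (j + 1) := by
    simp [hf.alternating.tsum_eq_zero_add, pow_succ, tsum_neg, sub_eq_add_neg]
  have hdiff : ∑' j, (-1) ^ j * (f j - f (j + 1)) =
      ∑' j, (-1) ^ j * f j - ∑' j, (-1) ^ j * f (j + 1) := by
    simp_rw [mul_sub]
    exact hf.alternating.tsum_sub hf₁.alternating
  have hanti : Antitone fun j ↦ f j - f (j + 1) :=
    antitone_nat_of_succ_le fun j ↦ by linarith [hconv j]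
  have hnonneg := tsum_alternating_nonneg_of_antitone hanti (hf.sub hf₁)
  linarith

theorem two_mul_exp_neg_le_one_add_exp_neg {δ c : ℝ} (hδ : 0 ≤ δ) (hc : c ≤ δ ^ 2) :
    2 * exp (-δ) ≤ 1 + exp (-(2 * δ + c)) := by
  -- multiplied by `exp (2δ)` this is `(exp δ - 1)² ≥ δ² ≥ c ≥ 1 - exp (-c)`
  have key : 2 * exp δ ≤ exp δ ^ 2 + exp (-c) := by
    nlinarith [add_one_le_exp δ, add_one_le_exp (-c)]
  have h₁ : 2 * exp (-δ) = 2 * exp δ * exp (-(2 * δ)) := by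
    rw [mul_assoc, ← exp_add]; ring_nf
  have h₂ : 1 + exp (-(2 * δ + c)) = (exp δ ^ 2 + exp (-c)) * exp (-(2 * δ)) := by
    rw [add_mul, sq, ← exp_add, ← exp_add, ← exp_add, show δ + δ + -(2 * δ) = 0 by ring, exp_zero,
      show -c + -(2 * δ) = -(2 * δ + c) by ring]
  rw [h₁, h₂]
  exact mul_le_mul_of_nonneg_right key (exp_pos _).le

noncomputable def gaussWeight (σ x t : ℝ) : ℝ := exp (-(t ^ 2 + 2 * x * t) / (2 * σ ^ 2))

namespace gaussWeight

variable {σ x : ℝ}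

theorem pos (t : ℝ) : 0 < gaussWeight σ x t := exp_pos _

theorem add (t s : ℝ) :
    gaussWeight σ x (t + s) = gaussWeight σ x t * exp (-(s * (s + 2 * (t + x))) / (2 * σ ^ 2)) := by
  rw [gaussWeight, gaussWeight, ← exp_add]; ring_nf

theorem two_mul_le_add (hσ : 0 < σ) {t : ℝ} (ht : σ ≤ t + x + 1 / 2) :
    2 * gaussWeight σ x (t + 1) ≤ gaussWeight σ x t + gaussWeight σ x (t + 2) := by
  set δ := (2 * (t + x) + 1) / (2 * σ ^ 2) with hδ_def
  have hδ : 0 ≤ δ := div_nonneg (by linarith) (by positivity)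
  have hc : 1 / σ ^ 2 ≤ δ ^ 2 := by
    rw [div_pow, div_le_div_iff₀ (by positivity) (by positivity)]
    nlinarith [mul_le_mul ht ht hσ.le (by linarith)]
  have e₁ : -(1 * (1 + 2 * (t + x))) / (2 * σ ^ 2) = -δ := by ring
  have e₂ : -(2 * (2 + 2 * (t + x))) / (2 * σ ^ 2) = -(2 * δ + 1 / σ ^ 2) := by
    rw [hδ_def]; field_simp; ring
  rw [add, add, e₁, e₂]
  nlinarith [mul_le_mul_of_nonneg_left (two_mul_exp_neg_le_one_add_exp_neg hδ hc)
    (pos (σ := σ) (x := x) t).le]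

theorem le_mul_geometric (t : ℝ) (j : ℕ) :
    gaussWeight σ x (t + j) ≤ gaussWeight σ x t * exp (-(t + x) / σ ^ 2) ^ j := by
  rw [add, ← exp_nat_mul]
  gcongr
  · exact (pos t).le
  have : 0 ≤ (j : ℝ) ^ 2 / (2 * σ ^ 2) := by positivity
  have h : -((j : ℝ) * (j + 2 * (t + x))) / (2 * σ ^ 2) =
      j * (-(t + x) / σ ^ 2) - (j : ℝ) ^ 2 / (2 * σ ^ 2) := by
    rcases eq_or_ne σ 0 with rfl | hσ
    · simp
    · field_simp; ring
  linarith

theorem summable_nat_add (hσ : σ ≠ 0) {t : ℝ} (ht : 0 < t + x) :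
    Summable fun j : ℕ ↦ gaussWeight σ x (t + j) := by
  have hr : exp (-(t + x) / σ ^ 2) < 1 := by
    rw [exp_lt_one_iff, neg_div, neg_lt_zero]; positivity
  exact Summable.of_nonneg_of_le (fun _ ↦ (pos _).le) (le_mul_geometric t)
    ((summable_geometric_of_lt_one (exp_pos _).le hr).mul_left _)

end gaussWeight

theorem stmt17_general (σ x : ℝ) (hσ : 0 < σ) (k : ℕ)
    (hkσ : σ - x < 2 * (k : ℝ) - 1) :
    (1 / 2) * Real.exp (-((2 * (k : ℝ) - 1) ^ 2 + 2 * x * (2 * (k : ℝ) - 1)) / (2 * σ ^ 2)) ≤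
      ∑' j : ℕ, (-1 : ℝ) ^ j *
        Real.exp (-((2 * (k : ℝ) - 1 + j) ^ 2 + 2 * x * (2 * (k : ℝ) - 1 + j)) / (2 * σ ^ 2)) := by
  set a : ℝ := 2 * k - 1
  have hconv (j : ℕ) : 2 * gaussWeight σ x (a + ↑(j + 1)) ≤
      gaussWeight σ x (a + j) + gaussWeight σ x (a + ↑(j + 2)) := by
    have hj : (0 : ℝ) ≤ j := j.cast_nonneg
    simpa only [Nat.cast_add, Nat.cast_one, Nat.cast_ofNat, add_assoc] using
      gaussWeight.two_mul_le_add hσ (t := a + j) (by linarith)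
  have h := half_le_tsum_alternating_of_convex
    (gaussWeight.summable_nat_add hσ.ne' (t := a) (by linarith)) hconv
  rw [Nat.cast_zero, add_zero] at h
  rw [one_div_mul_eq_div]
  exact h

theorem stmt17 (σ x : ℝ) (hσ : 0 < σ) (hx : -1/2 ≤ x) (k : ℕ) (hk : 1 ≤ k)
    (hkσ : σ - x < 2 * (k : ℝ) - 1) :
    (1 / 2) * Real.exp (-((2 * (k : ℝ) - 1) ^ 2 + 2 * x * (2 * (k : ℝ) - 1)) / (2 * σ ^ 2)) ≤
      ∑' j : ℕ, (-1 : ℝ) ^ j *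
        Real.exp (-((2 * (k : ℝ) - 1 + j) ^ 2 + 2 * x * (2 * (k : ℝ) - 1 + j)) / (2 * σ ^ 2)) :=
  stmt17_general σ x hσ k hkσ
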